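/- arXiv:1612.09203 — 3 statements merged into one kernel-verified Lean document; each statement's English description precedes it below -/
import Mathlib

section
/- Let W : ℝᵐ → ℝᵐ be linear with W*W = I and J(u) = ‖Wu‖₁, K = I : (ℝᵐ, ‖·‖₁) → (ℝᵐ, ‖·‖₂). If u_λ ∈ ℝᵐ is such that every nonzero entry of Wu_λ has the same absolute value c ≠ 0, then u_λ is a generalised singular vector: (‖Wu_λ‖₁/‖u_λ‖₂²) u_λ ∈ ∂J(u_λ). Moreover if ‖u_λ‖₂ = 1 and Wu_λ has n nonzero entries then the singular value is λ = √n. -/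
open Finset Matrix

/-!
Put `v = W u`. Since `W` is an isometry, `‖u‖₂ = ‖v‖₂` and `Wᵀ v = u`. If the `n` nonzero
entries of `v` all have modulus `a`, then `‖v‖₁ = n a` and `‖v‖₂² = n a²`, so
`λ = ‖v‖₁ / ‖v‖₂² = 1 / a` and `λ v = sign ∘ v`, a subgradient of `‖·‖₁` at `v`; applying `Wᵀ`
gives `λ u ∈ Wᵀ ∂‖·‖₁(v)`. When `‖v‖₂ = 1` we get `n a² = 1`, hence `λ = n a = √n`.
-/

theorem Real.sign_eq_div_abs (x : ℝ) : Real.sign x = x / |x| := by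
  rcases lt_trichotomy x 0 with hx | rfl | hx
  · rw [Real.sign_of_neg hx, abs_of_neg hx, div_neg, div_self hx.ne]
  · simp
  · rw [Real.sign_of_pos hx, abs_of_pos hx, div_self hx.ne']

theorem Real.sign_mem_Icc (x : ℝ) : Real.sign x ∈ Set.Icc (-1 : ℝ) 1 := by
  rcases Real.sign_apply_eq x with h | h | h <;> rw [h] <;> norm_num

theorem Matrix.sum_mulVec_sq_of_transpose_mul_self {ι : Type*} [Fintype ι] [DecidableEq ι]
    {W : Matrix ι ι ℝ} (hW : Wᵀ * W = 1) (u : ι → ℝ) :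
    ∑ i, (W *ᵥ u) i ^ 2 = ∑ i, u i ^ 2 := by
  have h : (W *ᵥ u) ⬝ᵥ (W *ᵥ u) = u ⬝ᵥ u := by
    rw [dotProduct_mulVec, ← mulVec_transpose, mulVec_mulVec, hW, one_mulVec]
  simpa only [dotProduct, sq] using h

section EqualPeaks

variable {ι : Type*} [Fintype ι] {v : ι → ℝ} {a : ℝ}

theorem sum_comp_eq_card_mul {g : ℝ → ℝ} {b : ℝ} (hg0 : g 0 = 0)
    (hg : ∀ i, v i ≠ 0 → g (v i) = b) :
    ∑ i, g (v i) = #{i | v i ≠ 0} * b := by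
  rw [← sum_filter_of_ne (p := fun i ↦ v i ≠ 0) fun i _ hgi hvi ↦ hgi (by rw [hvi, hg0]),
    sum_congr rfl fun i hi ↦ hg i (mem_filter.mp hi).2, sum_const, nsmul_eq_mul]

variable (hpeak : ∀ i, v i ≠ 0 → |v i| = a)
include hpeak

theorem sum_abs_eq_card_mul_of_abs_eq : ∑ i, |v i| = #{i | v i ≠ 0} * a :=
  sum_comp_eq_card_mul abs_zero hpeak

theorem sum_sq_eq_card_mul_of_abs_eq : ∑ i, v i ^ 2 = #{i | v i ≠ 0} * a ^ 2 :=
  sum_comp_eq_card_mul (g := fun x ↦ x ^ 2) (zero_pow two_ne_zero) fun i hi ↦ by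
    rw [← hpeak i hi, sq_abs]

theorem sum_abs_div_sum_sq_smul_eq_sign_of_abs_eq :
    ((∑ i, |v i|) / ∑ i, v i ^ 2) • v = fun i ↦ Real.sign (v i) := by
  funext i
  by_cases hi : v i = 0
  · simp [hi]
  have hn : (#{i | v i ≠ 0} : ℝ) ≠ 0 :=
    Nat.cast_ne_zero.mpr (card_ne_zero_of_mem (mem_filter.mpr ⟨mem_univ i, hi⟩))
  have ha : a ≠ 0 := hpeak i hi ▸ abs_ne_zero.mpr hi
  rw [sum_abs_eq_card_mul_of_abs_eq hpeak, sum_sq_eq_card_mul_of_abs_eq hpeak,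
    Real.sign_eq_div_abs, hpeak i hi, Pi.smul_apply, smul_eq_mul]
  field_simp

theorem sum_abs_eq_sqrt_card_of_abs_eq (ha : 0 ≤ a) (hv : ∑ i, v i ^ 2 = 1) :
    ∑ i, |v i| = √(#{i | v i ≠ 0} : ℝ) := by
  rw [sum_sq_eq_card_mul_of_abs_eq hpeak] at hv
  rw [sum_abs_eq_card_mul_of_abs_eq hpeak, eq_comm,
    Real.sqrt_eq_iff_eq_sq (by positivity) (by positivity)]
  -- `(n a)² = n · (n a²) = n`
  linear_combination -(#{i | v i ≠ 0} : ℝ) * hv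

end EqualPeaks

theorem dictionary_singular_vectors_general
    {m : ℕ} (W : Matrix (Fin m) (Fin m) ℝ) (hW : W.transpose * W = 1)
    (u : Fin m → ℝ) (c : ℝ)
    (hpeak : ∀ i, W.mulVec u i ≠ 0 → |W.mulVec u i| = |c|) :
    (∃ s : Fin m → ℝ,
      (∀ i, (W.mulVec u i ≠ 0 → s i = Real.sign (W.mulVec u i)) ∧
        s i ∈ Set.Icc (-1 : ℝ) 1) ∧
      ((∑ i, |W.mulVec u i|) / (∑ i, (u i) ^ 2)) • u = W.transpose.mulVec s) ∧
    ((∑ i, (u i) ^ 2) = 1 →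
      (∑ i, |W.mulVec u i|) / (∑ i, (u i) ^ 2)
        = Real.sqrt ((univ.filter (fun i => W.mulVec u i ≠ 0)).card)) := by
  have hnorm := sum_mulVec_sq_of_transpose_mul_self hW u
  have hu : Wᵀ *ᵥ (W *ᵥ u) = u := by rw [mulVec_mulVec, hW, one_mulVec]
  refine ⟨⟨fun i ↦ Real.sign ((W *ᵥ u) i), fun i ↦ ⟨fun _ ↦ rfl, Real.sign_mem_Icc _⟩, ?_⟩,
    fun h1 ↦ ?_⟩
  · rw [← hnorm, ← sum_abs_div_sum_sq_smul_eq_sign_of_abs_eq hpeak, mulVec_smul, hu]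
  · rw [h1, div_one]
    exact sum_abs_eq_sqrt_card_of_abs_eq hpeak (abs_nonneg c) (hnorm.trans h1)

/-- Vectors whose image under an orthonormal transform `W` consists of peaks of equal
magnitude are generalised singular vectors of `J(u) = ‖Wu‖₁` with `K` the identity. -/
theorem dictionary_singular_vectors
    {m : ℕ} (W : Matrix (Fin m) (Fin m) ℝ) (hW : W.transpose * W = 1)
    (u : Fin m → ℝ) (c : ℝ) (hc : c ≠ 0) (hne : u ≠ 0)
    (hpeak : ∀ i, W.mulVec u i ≠ 0 → |W.mulVec u i| = |c|) :
    (∃ s : Fin m → ℝ,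
      (∀ i, (W.mulVec u i ≠ 0 → s i = Real.sign (W.mulVec u i)) ∧
        s i ∈ Set.Icc (-1 : ℝ) 1) ∧
      ((∑ i, |W.mulVec u i|) / (∑ i, (u i) ^ 2)) • u = W.transpose.mulVec s) ∧
    ((∑ i, (u i) ^ 2) = 1 →
      (∑ i, |W.mulVec u i|) / (∑ i, (u i) ^ 2)
        = Real.sqrt ((univ.filter (fun i => W.mulVec u i ≠ 0)).card)) :=
  dictionary_singular_vectors_general W hW u c hpeak
end

section
/- Let {u_{λ_j}}_{j=1}^n be K-normalised singular vectors of an absolutely one-homogeneous convex functional J, satisfying K-orthogonality ⟨Ku_{λ_i}, Ku_{λ_j}⟩ = 0 for i ≠ j, and the SUB0 condition Σ_{j=1}^k λ_j K*K u_{λ_j} ∈ ∂J(0) for all k = 1,…,n. Then for every k ∈ {1,…,n} and all coefficients c_j ≥ 0: Σ_{j=1}^k λ_j K*K u_{λ_j} ∈ ∂J(Σ_{j=1}^k c_j u_{λ_j}). Conversely, if this inclusion holds for all k with some nonnegative coefficients, then SUB0 holds. -/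
open RealInnerProductSpace Finset

/-- The subdifferential of `J` at `u`. -/
def subdiff {U : Type*} [NormedAddCommGroup U] [NormedSpace ℝ U]
    (J : U → ℝ) (u : U) : Set (U →L[ℝ] ℝ) :=
  {p | ∀ v : U, J u + p (v - u) ≤ J v}

/-- The Banach adjoint `K*` applied to `w ∈ H`. -/
noncomputable def Kstar {U H : Type*} [NormedAddCommGroup U] [NormedSpace ℝ U]
    [NormedAddCommGroup H] [InnerProductSpace ℝ H]
    (K : U →L[ℝ] H) (w : H) : U →L[ℝ] ℝ :=
  ((innerSL ℝ) w).comp K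

/-!
`p := ∑_{j<k} λ_j K*K u_j` pairs with `w := ∑_{j<k} c_j u_j` to give `∑ λ_j c_j`, by
K-orthonormality, while subadditivity and homogeneity of `J` give `J w ≤ ∑ c_j J(u_j) = ∑ c_j λ_j`.
So `J w ≤ p w`; for a one-homogeneous `J`, `p ∈ ∂J(0)` means `p ≤ J`, and then
`J w + p (v - w) ≤ p v ≤ J v`, i.e. `p ∈ ∂J(w)`. The converse is the case `c = 0`.
-/

section PosHomogeneous

variable {E : Type*} [AddCommGroup E] [Module ℝ E] {J : E → ℝ}

theorem map_zero_of_posHomogeneous (hhom : ∀ c : ℝ, 0 ≤ c → ∀ x, J (c • x) = c * J x) :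
    J 0 = 0 := by
  simpa using hhom 0 le_rfl 0

theorem map_add_le_of_convexOn_of_posHomogeneous (hconv : ConvexOn ℝ Set.univ J)
    (hhom : ∀ c : ℝ, 0 ≤ c → ∀ x, J (c • x) = c * J x) (a b : E) :
    J (a + b) ≤ J a + J b := by
  have hmid : J ((1 / 2 : ℝ) • a + (1 / 2 : ℝ) • b) ≤ (1 / 2 : ℝ) * J a + (1 / 2 : ℝ) * J b :=
    hconv.2 (Set.mem_univ a) (Set.mem_univ b) (by norm_num) (by norm_num) (by norm_num)
  have hdouble : a + b = (2 : ℝ) • ((1 / 2 : ℝ) • a + (1 / 2 : ℝ) • b) := by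
    rw [smul_add, smul_smul, smul_smul]
    norm_num
  rw [hdouble, hhom 2 (by norm_num)]
  linarith

theorem map_sum_smul_le_of_convexOn_of_posHomogeneous {ι : Type*} (hconv : ConvexOn ℝ Set.univ J)
    (hhom : ∀ c : ℝ, 0 ≤ c → ∀ x, J (c • x) = c * J x) (s : Finset ι) (c : ι → ℝ) (u : ι → E)
    (hc : ∀ i ∈ s, 0 ≤ c i) :
    J (∑ i ∈ s, c i • u i) ≤ ∑ i ∈ s, c i * J (u i) := by
  calc J (∑ i ∈ s, c i • u i)
      ≤ ∑ i ∈ s, J (c i • u i) :=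
        le_sum_of_subadditive J (map_zero_of_posHomogeneous hhom).le
          (map_add_le_of_convexOn_of_posHomogeneous hconv hhom) s _
    _ = ∑ i ∈ s, c i * J (u i) := sum_congr rfl fun i hi => hhom (c i) (hc i hi) (u i)

end PosHomogeneous

section Subdiff

variable {U : Type*} [NormedAddCommGroup U] [NormedSpace ℝ U] {J : U → ℝ} {p : U →L[ℝ] ℝ}

theorem mem_subdiff_zero_iff (hJ0 : J 0 = 0) : p ∈ subdiff J 0 ↔ ∀ v, p v ≤ J v := by
  simp [subdiff, hJ0]

theorem mem_subdiff_of_mem_subdiff_zero (hJ0 : J 0 = 0) (hp : p ∈ subdiff J 0) {w : U}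
    (hw : J w ≤ p w) : p ∈ subdiff J w := by
  intro v
  rw [map_sub]
  linarith [(mem_subdiff_zero_iff hJ0).1 hp v]

end Subdiff

theorem Kstar_apply {U H : Type*} [NormedAddCommGroup U] [NormedSpace ℝ U]
    [NormedAddCommGroup H] [InnerProductSpace ℝ H] (K : U →L[ℝ] H) (w : H) (v : U) :
    Kstar K w v = ⟪w, K v⟫ :=
  rfl

theorem sum_smul_Kstar_apply_sum_smul {ι U H : Type*} [NormedAddCommGroup U] [NormedSpace ℝ U]
    [NormedAddCommGroup H] [InnerProductSpace ℝ H] (K : U →L[ℝ] H) {s : Finset ι} {u : ι → U}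
    (hnorm : ∀ j ∈ s, ‖K (u j)‖ = 1)
    (horth : ∀ i ∈ s, ∀ j ∈ s, i ≠ j → ⟪K (u i), K (u j)⟫ = 0) (lam c : ι → ℝ) :
    (∑ j ∈ s, lam j • Kstar K (K (u j))) (∑ i ∈ s, c i • u i) = ∑ j ∈ s, lam j * c j := by
  rw [_root_.sum_apply]
  refine sum_congr rfl fun j hj => ?_
  have hterm (i : ι) : ⟪K (u j), K (c i • u i)⟫ = c i * ⟪K (u j), K (u i)⟫ := by
    rw [map_smul, real_inner_smul_right]
  rw [smul_apply, Kstar_apply, map_sum, inner_sum, sum_eq_single_of_mem j hj fun i hi hij => by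
    rw [hterm, horth j hj i hi hij.symm, mul_zero], hterm, real_inner_self_eq_norm_sq, hnorm j hj,
    smul_eq_mul]
  ring

theorem sub0_iff_subdifferential_linearity_general
    {U H : Type*} [NormedAddCommGroup U] [NormedSpace ℝ U]
    [NormedAddCommGroup H] [InnerProductSpace ℝ H]
    (K : U →L[ℝ] H) (J : U → ℝ)
    (hconv : ConvexOn ℝ Set.univ J)
    (hhom : ∀ (c : ℝ) (x : U), J (c • x) = |c| * J x)
    (n : ℕ) (u : ℕ → U) (lam : ℕ → ℝ)
    (hnorm : ∀ j < n, ‖K (u j)‖ = 1)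
    (hlam : ∀ j < n, lam j = J (u j))
    (horth : ∀ i < n, ∀ j < n, i ≠ j → ⟪K (u i), K (u j)⟫ = 0) :
    ((∀ k, 1 ≤ k → k ≤ n →
        (∑ j ∈ range k, lam j • Kstar K (K (u j))) ∈ subdiff J 0) ↔
      (∀ k, 1 ≤ k → k ≤ n → ∀ c : ℕ → ℝ, (∀ j, 0 ≤ c j) →
        (∑ j ∈ range k, lam j • Kstar K (K (u j))) ∈
          subdiff J (∑ j ∈ range k, c j • u j))) := by
  have hpos : ∀ c : ℝ, 0 ≤ c → ∀ x, J (c • x) = c * J x := fun c hc x => by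
    rw [hhom, abs_of_nonneg hc]
  have hJ0 : J 0 = 0 := map_zero_of_posHomogeneous hpos
  constructor
  · intro hsub0 k hk1 hkn c hc
    have hlt : ∀ j ∈ range k, j < n := fun j hj => (mem_range.1 hj).trans_le hkn
    refine mem_subdiff_of_mem_subdiff_zero hJ0 (hsub0 k hk1 hkn) ?_
    rw [sum_smul_Kstar_apply_sum_smul K (fun j hj => hnorm j (hlt j hj))
      (fun i hi j hj => horth i (hlt i hi) j (hlt j hj))]
    calc J (∑ j ∈ range k, c j • u j)
        ≤ ∑ j ∈ range k, c j * J (u j) :=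
          map_sum_smul_le_of_convexOn_of_posHomogeneous hconv hpos _ c u fun j _ => hc j
      _ = ∑ j ∈ range k, lam j * c j :=
          sum_congr rfl fun j hj => by rw [hlam j (hlt j hj), mul_comm]
  · intro hlin k hk1 hkn
    simpa using hlin k hk1 hkn 0 fun _ => le_rfl

/-- The SUB0 condition is equivalent to linearity of the subdifferential on nonnegative
combinations of K-orthogonal singular vectors. -/
theorem sub0_iff_subdifferential_linearity
    {U H : Type*} [NormedAddCommGroup U] [NormedSpace ℝ U]
    [NormedAddCommGroup H] [InnerProductSpace ℝ H]
    (K : U →L[ℝ] H) (J : U → ℝ)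
    (hconv : ConvexOn ℝ Set.univ J)
    (hlsc : LowerSemicontinuous J)
    (hhom : ∀ (c : ℝ) (x : U), J (c • x) = |c| * J x)
    (n : ℕ) (u : ℕ → U) (lam : ℕ → ℝ)
    (hsv : ∀ j < n, (lam j • Kstar K (K (u j))) ∈ subdiff J (u j))
    (hnorm : ∀ j < n, ‖K (u j)‖ = 1)
    (hlam : ∀ j < n, lam j = J (u j))
    (horth : ∀ i < n, ∀ j < n, i ≠ j → ⟪K (u i), K (u j)⟫ = 0) :
    ((∀ k, 1 ≤ k → k ≤ n →
        (∑ j ∈ range k, lam j • Kstar K (K (u j))) ∈ subdiff J 0) ↔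
      (∀ k, 1 ≤ k → k ≤ n → ∀ c : ℕ → ℝ, (∀ j, 0 ≤ c j) →
        (∑ j ∈ range k, lam j • Kstar K (K (u j))) ∈
          subdiff J (∑ j ∈ range k, c j • u j))) :=
  sub0_iff_subdifferential_linearity_general K J hconv hhom n u lam hnorm hlam horth
end

section
/- Suppose the absolutely one-homogeneous functional J satisfies the norm-inequality c₀‖u‖_U ≤ J(u) for all u ∈ ker(J)^⊥ with constant c₀ > 0. If ω* ∈ U* satisfies ‖ω*‖_{U*} ≤ c₀ and ⟨ω*, v⟩ = 0 for all v ∈ ker(J), then ω* ∈ ∂J(0), i.e. ⟨ω*, w⟩ ≤ J(w) for all w ∈ U. -/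
section Subadditivity

variable {E : Type*} [AddCommGroup E] [Module ℝ E] {J : E → ℝ}

theorem ConvexOn.map_add_le_of_map_smul (hconv : ConvexOn ℝ Set.univ J)
    (hhom : ∀ c : ℝ, 0 ≤ c → ∀ x, J (c • x) = c * J x) (x y : E) :
    J (x + y) ≤ J x + J y := by
  have hmid : J ((1 / 2 : ℝ) • x + (1 / 2 : ℝ) • y) ≤ (1 / 2 : ℝ) * J x + (1 / 2 : ℝ) * J y :=
    hconv.2 (Set.mem_univ x) (Set.mem_univ y) (by norm_num) (by norm_num) (by norm_num)
  rw [← smul_add, hhom _ (by norm_num)] at hmid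
  linarith

theorem ConvexOn.map_sub_le_of_map_eq_zero (hconv : ConvexOn ℝ Set.univ J)
    (hhom : ∀ (c : ℝ) (x : E), J (c • x) = |c| * J x) {k : E} (hk : J k = 0) (x : E) :
    J (x - k) ≤ J x :=
  calc J (x - k) = J (x + (-1 : ℝ) • k) := by rw [neg_one_smul, sub_eq_add_neg]
    _ ≤ J x + J ((-1 : ℝ) • k) :=
      hconv.map_add_le_of_map_smul (fun c hc x ↦ by rw [hhom, abs_of_nonneg hc]) _ _
    _ = J x := by rw [hhom, hk, mul_zero, add_zero]

end Subadditivity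

theorem dual_norm_bound_implies_subdiff_at_zero_general
    {U : Type*} [NormedAddCommGroup U] [NormedSpace ℝ U]
    (J : U → ℝ)
    (hconv : ConvexOn ℝ Set.univ J)
    (hhom : ∀ (c : ℝ) (x : U), J (c • x) = |c| * J x)
    (c₀ : ℝ) (Kperp : Set U)
    (hNI : ∀ u ∈ Kperp, c₀ * ‖u‖ ≤ J u)
    (hdecomp : ∀ ω : U, ∃ ω₁ ω₂ : U, ω = ω₁ + ω₂ ∧ J ω₁ = 0 ∧ ω₂ ∈ Kperp)
    (p : U →L[ℝ] ℝ) (hp : ‖p‖ ≤ c₀)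
    (hker : ∀ v : U, J v = 0 → p v = 0) :
    ∀ w : U, p w ≤ J w := by
  intro w
  obtain ⟨ω₁, ω₂, rfl, hω₁, hω₂⟩ := hdecomp w
  calc p (ω₁ + ω₂) = p ω₂ := by rw [map_add, hker ω₁ hω₁, zero_add]
    _ ≤ ‖p‖ * ‖ω₂‖ := (Real.le_norm_self _).trans (p.le_opNorm ω₂)
    _ ≤ c₀ * ‖ω₂‖ := by gcongr
    _ ≤ J ω₂ := hNI ω₂ hω₂
    _ = J (ω₁ + ω₂ - ω₁) := by rw [add_sub_cancel_left]
    _ ≤ J (ω₁ + ω₂) := hconv.map_sub_le_of_map_eq_zero hhom hω₁ _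

/-- Under a norm inequality on the complement of the kernel, bounded dual elements that
vanish on the kernel of `J` belong to the subdifferential of `J` at zero. -/
theorem dual_norm_bound_implies_subdiff_at_zero
    {U : Type*} [NormedAddCommGroup U] [NormedSpace ℝ U]
    (J : U → ℝ)
    (hconv : ConvexOn ℝ Set.univ J)
    (hhom : ∀ (c : ℝ) (x : U), J (c • x) = |c| * J x)
    (c₀ : ℝ) (hc₀ : 0 < c₀) (Kperp : Set U)
    (hNI : ∀ u ∈ Kperp, c₀ * ‖u‖ ≤ J u)
    (hdecomp : ∀ ω : U, ∃ ω₁ ω₂ : U, ω = ω₁ + ω₂ ∧ J ω₁ = 0 ∧ ω₂ ∈ Kperp)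
    (p : U →L[ℝ] ℝ) (hp : ‖p‖ ≤ c₀)
    (hker : ∀ v : U, J v = 0 → p v = 0) :
    ∀ w : U, p w ≤ J w :=
  dual_norm_bound_implies_subdiff_at_zero_general J hconv hhom c₀ Kperp hNI hdecomp p hp hker
end
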